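/- arXiv:math/9911073 — 2 statements merged into one kernel-verified Lean document; each statement's English description precedes it below -/
import Mathlib

section
/- For every P-functional φ belonging to a P-type A and every i ≥ κ(φ), the closed term φ^λ : Aⁱ i-defines φ. -/
set_option autoImplicit false

/-- Simple types over a set `ν` of atomic types. -/
inductive Ty (ν : Type) : Type
  | atom : ν → Ty ν
  | arrow : Ty ν → Ty ν → Ty ν

/-- A typing context: the (types of the) free variables. -/
abbrev Ctx (ν : Type) : Type := List (Ty ν)

/-- Typed de Bruijn variables. -/
inductive Var {ν : Type} : Ctx ν → Ty ν → Type
  | vz {Γ : Ctx ν} {A : Ty ν} : Var (A :: Γ) A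
  | vs {Γ : Ctx ν} {A B : Ty ν} : Var Γ A → Var (B :: Γ) A

/-- Typed terms of the simply typed lambda calculus Λ. -/
inductive Tm {ν : Type} : Ctx ν → Ty ν → Type
  | var {Γ : Ctx ν} {A : Ty ν} : Var Γ A → Tm Γ A
  | app {Γ : Ctx ν} {A B : Ty ν} : Tm Γ (Ty.arrow A B) → Tm Γ A → Tm Γ B
  | lam {Γ : Ctx ν} {A B : Ty ν} : Tm (A :: Γ) B → Tm Γ (Ty.arrow A B)

/-- Renamings between contexts. -/
def Ren {ν : Type} (Γ Δ : Ctx ν) : Type := ∀ A : Ty ν, Var Γ A → Var Δ A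

def Ren.ext {ν : Type} {Γ Δ : Ctx ν} (ρ : Ren Γ Δ) (A : Ty ν) : Ren (A :: Γ) (A :: Δ) :=
  fun _ v => match v with
  | .vz => .vz
  | .vs w => .vs (ρ _ w)

def Tm.rename {ν : Type} : ∀ {Γ Δ : Ctx ν} {A : Ty ν}, Ren Γ Δ → Tm Γ A → Tm Δ A
  | _, _, _, ρ, .var v => .var (ρ _ v)
  | _, _, _, ρ, .app f a => .app (f.rename ρ) (a.rename ρ)
  | _, _, _, ρ, .lam b => .lam (b.rename (ρ.ext _))

/-- Simultaneous substitutions. -/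
def Subst {ν : Type} (Γ Δ : Ctx ν) : Type := ∀ A : Ty ν, Var Γ A → Tm Δ A

def Subst.ext {ν : Type} {Γ Δ : Ctx ν} (σ : Subst Γ Δ) (A : Ty ν) :
    ∀ B : Ty ν, Var (A :: Γ) B → Tm (A :: Δ) B
  | _, .vz => .var .vz
  | _, .vs w => (σ _ w).rename (fun _ => Var.vs)

def Tm.subst {ν : Type} : ∀ {Γ Δ : Ctx ν} {A : Ty ν}, Subst Γ Δ → Tm Γ A → Tm Δ A
  | _, _, _, σ, .var v => σ _ v
  | _, _, _, σ, .app f a => .app (f.subst σ) (a.subst σ)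
  | _, _, _, σ, .lam b => .lam (b.subst (Subst.ext σ _))

/-- Extending a substitution with a term for the last variable. -/
def Subst.cons {ν : Type} {Γ Δ : Ctx ν} {A : Ty ν} (b : Tm Δ A) (σ : Subst Γ Δ) :
    ∀ B : Ty ν, Var (A :: Γ) B → Tm Δ B
  | _, .vz => b
  | _, .vs w => σ _ w

/-- Substitution of a single term for the last variable: `a[b/x]`. -/
def Tm.subst1 {ν : Type} {Γ : Ctx ν} {A B : Ty ν} (a : Tm (A :: Γ) B) (b : Tm Γ A) : Tm Γ B :=
  a.subst (Subst.cons b (fun _ v => .var v))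

/-- The theory Λ of βη-equality. -/
inductive Eqv {ν : Type} : ∀ {Γ : Ctx ν} {A : Ty ν}, Tm Γ A → Tm Γ A → Prop
  | refl {Γ : Ctx ν} {A : Ty ν} (a : Tm Γ A) : Eqv a a
  | symm {Γ : Ctx ν} {A : Ty ν} {a b : Tm Γ A} : Eqv a b → Eqv b a
  | trans {Γ : Ctx ν} {A : Ty ν} {a b c : Tm Γ A} : Eqv a b → Eqv b c → Eqv a c
  | congApp {Γ : Ctx ν} {A B : Ty ν} {f g : Tm Γ (Ty.arrow A B)} {a b : Tm Γ A} :
      Eqv f g → Eqv a b → Eqv (.app f a) (.app g b)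
  | congLam {Γ : Ctx ν} {A B : Ty ν} {a b : Tm (A :: Γ) B} :
      Eqv a b → Eqv (.lam a) (.lam b)
  | beta {Γ : Ctx ν} {A B : Ty ν} (a : Tm (A :: Γ) B) (b : Tm Γ A) :
      Eqv (.app (.lam a) b) (a.subst1 b)
  | eta {Γ : Ctx ν} {A B : Ty ν} (a : Tm Γ (Ty.arrow A B)) :
      Eqv (.lam (.app (a.rename (fun _ => Var.vs)) (.var .vz))) a

/-- Substitution of types for the atomic types, on types. -/
def Ty.substA {ν : Type} (σ : ν → Ty ν) : Ty ν → Ty ν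
  | .atom v => σ v
  | .arrow A B => .arrow (A.substA σ) (B.substA σ)

def Var.substA {ν : Type} (σ : ν → Ty ν) :
    ∀ {Γ : Ctx ν} {A : Ty ν}, Var Γ A → Var (Γ.map (Ty.substA σ)) (A.substA σ)
  | _, _, .vz => .vz
  | _, _, .vs v => .vs (v.substA σ)

/-- Substitution of types for the atomic types, on terms: type-instances. -/
def Tm.substA {ν : Type} (σ : ν → Ty ν) :
    ∀ {Γ : Ctx ν} {A : Ty ν}, Tm Γ A → Tm (Γ.map (Ty.substA σ)) (A.substA σ)
  | _, _, .var v => .var (v.substA σ)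
  | _, _, .app f a => .app (f.substA σ) (a.substA σ)
  | _, _, .lam b => .lam (b.substA σ)

/-- `Ty.arrs [A₁, …, Aₘ] B = Aₘ → (… → (A₁ → B))` : the type of `λx₁…xₘ.a`. -/
def Ty.arrs {ν : Type} : Ctx ν → Ty ν → Ty ν
  | [], B => B
  | A :: Γ, B => Ty.arrs Γ (Ty.arrow A B)

/-- λ-abstracting all the free variables of a term. -/
def Tm.lamAll {ν : Type} : ∀ {Γ : Ctx ν} {A : Ty ν}, Tm Γ A → Tm [] (Ty.arrs Γ A)
  | [], _, a => a
  | _ :: Γ, _, a => Tm.lamAll (Γ := Γ) (Tm.lam a)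

/-- `Ty.arrsR [B₁, …, Bₙ] C = B₁ → (… → (Bₙ → C))`. -/
def Ty.arrsR {ν : Type} : List (Ty ν) → Ty ν → Ty ν
  | [], C => C
  | B :: Bs, C => Ty.arrow B (Ty.arrsR Bs C)

/-- A list of terms `h₁ : B₁, …, hₙ : Bₙ` in context `Δ`. -/
inductive HList {ν : Type} (Δ : Ctx ν) : List (Ty ν) → Type
  | nil : HList Δ []
  | cons {B : Ty ν} {Bs : List (Ty ν)} : Tm Δ B → HList Δ Bs → HList Δ (B :: Bs)

/-- Iterated application `t h₁ … hₙ`. -/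
def HList.apps {ν : Type} {Δ : Ctx ν} :
    ∀ {Bs : List (Ty ν)} {C : Ty ν}, HList Δ Bs → Tm Δ (Ty.arrsR Bs C) → Tm Δ C
  | _, _, .nil, t => t
  | _, _, .cons h hs, t => HList.apps hs (t.app h)

/-- Iterated application `t h₁ … hₙ`. -/
def Tm.apps {ν : Type} {Δ : Ctx ν} {Bs : List (Ty ν)} {C : Ty ν}
    (t : Tm Δ (Ty.arrsR Bs C)) (hs : HList Δ Bs) : Tm Δ C :=
  hs.apps t

/-- Weakening of a closed term into an arbitrary context. -/
def Var.elim0 {ν : Type} {A : Ty ν} {C : Sort*} : Var ([] : Ctx ν) A → C :=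
  fun v => nomatch v

def Tm.wk {ν : Type} {Δ : Ctx ν} {A : Ty ν} (t : Tm ([] : Ctx ν) A) : Tm Δ A :=
  t.rename (fun _ v => v.elim0)

/-! Λ built over the single atomic type `p`, represented by `Unit`. -/

/-- `AT 0 = p`, `AT (n+1) = AT n → AT n`. -/
def AT : ℕ → Ty Unit
  | 0 => .atom ()
  | n + 1 => .arrow (AT n) (AT n)

/-- `NT i = (AT i → AT i) → (AT i → AT i)`, the type `N_i` of Church numerals. -/
def NT (i : ℕ) : Ty Unit := .arrow (AT (i + 1)) (AT (i + 1))

/-- `iter f x n = f (f (… (f x)))` (`n` times). -/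
def Tm.iter {Γ : Ctx Unit} {A : Ty Unit} (f : Tm Γ (Ty.arrow A A)) (x : Tm Γ A) : ℕ → Tm Γ A
  | 0 => x
  | n + 1 => f.app (Tm.iter f x n)

/-- The Church numeral `[n]_i : N_i`, i.e. `λ x y. xⁿ(y)`. -/
def church (i n : ℕ) : Tm [] (NT i) :=
  .lam (.lam (Tm.iter (.var (.vs .vz)) (.var .vz) n))

/-- The full type structure over the finite ordinal `P = {0, …, h−1}`:
`P`-types and their `P`-functionals.  `interp h A` is `A^p_P`. -/
def interp (h : ℕ) : Ty Unit → Type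
  | .atom _ => Fin h
  | .arrow A B => interp h A → interp h B

/-- The type substitution replacing the atomic type `p` by `N_i`; `A.substA (subN i)`
is the type `Aⁱ`. -/
def subN (i : ℕ) : Unit → Ty Unit := fun _ => NT i

/-- `iDefines h i A φ t`: the closed term `t : Aⁱ` `i`-defines the `P`-functional
`φ ∈ A` (where `P = {0, …, h−1}`). -/
def iDefines (h i : ℕ) : ∀ A : Ty Unit, interp h A → Tm [] (A.substA (subN i)) → Prop
  | .atom _, n, t => Eqv t (church i n.val)
  | .arrow B C, φ, t => ∀ (ψ : interp h B) (b : Tm [] (B.substA (subN i))),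
      iDefines h i B ψ b → iDefines h i C (φ ψ) (t.app b)

attribute [reducible] Ren Subst NT AT

/-! ## Boilerplate: renaming and substitution lemmas -/

section Boiler
variable {ν : Type}

theorem Tm.rename_rename : ∀ {Γ Δ Θ : Ctx ν} {A : Ty ν} (t : Tm Γ A) (ρ : Ren Γ Δ)
    (ρ' : Ren Δ Θ), (t.rename ρ).rename ρ' = t.rename (fun B v => ρ' B (ρ B v))
  | _, _, _, _, .var v, _, _ => rfl
  | _, _, _, _, .app f a, ρ, ρ' => by
      simp only [Tm.rename, Tm.rename_rename]
  | _, _, _, _, .lam b, ρ, ρ' => by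
      simp only [Tm.rename, Tm.rename_rename]
      exact congrArg Tm.lam (congrArg (fun σ => Tm.rename σ b)
        (funext fun B => funext fun v => by cases v <;> rfl))

theorem Tm.subst_rename : ∀ {Γ Δ Θ : Ctx ν} {A : Ty ν} (t : Tm Γ A) (ρ : Ren Γ Δ)
    (σ : Subst Δ Θ), (t.rename ρ).subst σ = t.subst (fun B v => σ B (ρ B v))
  | _, _, _, _, .var v, _, _ => rfl
  | _, _, _, _, .app f a, ρ, σ => by
      simp only [Tm.rename, Tm.subst, Tm.subst_rename]
  | _, _, _, _, .lam b, ρ, σ => by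
      simp only [Tm.rename, Tm.subst, Tm.subst_rename]
      exact congrArg Tm.lam (congrArg (fun σ => Tm.subst σ b)
        (funext fun B => funext fun v => by cases v <;> rfl))

theorem Tm.rename_subst : ∀ {Γ Δ Θ : Ctx ν} {A : Ty ν} (t : Tm Γ A) (σ : Subst Γ Δ)
    (ρ : Ren Δ Θ), (t.subst σ).rename ρ = t.subst (fun B v => (σ B v).rename ρ)
  | _, _, _, _, .var v, _, _ => rfl
  | _, _, _, _, .app f a, σ, ρ => by
      simp only [Tm.rename, Tm.subst, Tm.rename_subst]
  | _, _, _, _, .lam b, σ, ρ => by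
      simp only [Tm.rename, Tm.subst, Tm.rename_subst]
      refine congrArg Tm.lam (congrArg (fun σ => Tm.subst σ b)
        (funext fun B => funext fun v => ?_))
      cases v with
      | vz => rfl
      | vs w =>
        show ((σ _ w).rename _).rename _ = ((σ _ w).rename ρ).rename _
        rw [Tm.rename_rename, Tm.rename_rename]
        rfl

theorem Tm.subst_subst : ∀ {Γ Δ Θ : Ctx ν} {A : Ty ν} (t : Tm Γ A) (σ : Subst Γ Δ)
    (τ : Subst Δ Θ), (t.subst σ).subst τ = t.subst (fun B v => (σ B v).subst τ)
  | _, _, _, _, .var v, _, _ => rfl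
  | _, _, _, _, .app f a, σ, τ => by
      simp only [Tm.subst, Tm.subst_subst]
  | _, _, _, _, .lam b, σ, τ => by
      simp only [Tm.subst, Tm.subst_subst]
      refine congrArg Tm.lam (congrArg (fun σ => Tm.subst σ b)
        (funext fun B => funext fun v => ?_))
      cases v with
      | vz => rfl
      | vs w =>
        show ((σ _ w).rename _).subst _ = ((σ _ w).subst τ).rename _
        rw [Tm.subst_rename, Tm.rename_subst]
        rfl

theorem Tm.rename_id : ∀ {Γ : Ctx ν} {A : Ty ν} (t : Tm Γ A),
    t.rename (fun _ v => v) = t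
  | _, _, .var v => rfl
  | _, _, .app f a => by simp only [Tm.rename, Tm.rename_id]
  | _, _, .lam b => by
      simp only [Tm.rename]
      conv_rhs => rw [← Tm.rename_id b]
      exact congrArg Tm.lam (congrArg (fun σ => Tm.rename σ b)
        (funext fun B => funext fun v => by cases v <;> rfl))

theorem Tm.subst_var : ∀ {Γ : Ctx ν} {A : Ty ν} (t : Tm Γ A),
    t.subst (fun _ v => .var v) = t
  | _, _, .var v => rfl
  | _, _, .app f a => by simp only [Tm.subst, Tm.subst_var]
  | _, _, .lam b => by
      simp only [Tm.subst]
      conv_rhs => rw [← Tm.subst_var b]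
      exact congrArg Tm.lam (congrArg (fun σ => Tm.subst σ b)
        (funext fun B => funext fun v => by cases v <;> rfl))

theorem Tm.rename_eq_subst : ∀ {Γ Δ : Ctx ν} {A : Ty ν} (t : Tm Γ A) (ρ : Ren Γ Δ),
    t.rename ρ = t.subst (fun B v => .var (ρ B v))
  | _, _, _, .var v, _ => rfl
  | _, _, _, .app f a, ρ => by simp only [Tm.rename, Tm.subst, Tm.rename_eq_subst]
  | _, _, _, .lam b, ρ => by
      simp only [Tm.rename, Tm.subst, Tm.rename_eq_subst]
      exact congrArg Tm.lam (congrArg (fun σ => Tm.subst σ b)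
        (funext fun B => funext fun v => by cases v <;> rfl))

/-- weakening then substituting one term is the identity -/
theorem Tm.rename_vs_subst1 {Γ : Ctx ν} {A B : Ty ν} (t : Tm Γ B) (u : Tm Γ A) :
    ((t.rename (fun _ => Var.vs)).subst1 u) = t := by
  unfold Tm.subst1
  rw [Tm.subst_rename]
  exact t.subst_var

theorem Tm.rename_vs_subst_ext {Γ Δ : Ctx ν} {A B : Ty ν} (t : Tm Γ B) (σ : Subst Γ Δ) :
    ((t.rename (fun _ => Var.vs)).subst (Subst.ext σ A)) =
      (t.subst σ).rename (fun _ => Var.vs) := by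
  rw [Tm.subst_rename, Tm.rename_subst]
  rfl

theorem Tm.wk_subst {Δ Δ' : Ctx ν} {A : Ty ν} (t : Tm ([] : Ctx ν) A) (σ : Subst Δ Δ') :
    (Tm.wk t (Δ := Δ)).subst σ = Tm.wk t := by
  unfold Tm.wk
  rw [Tm.subst_rename, Tm.rename_eq_subst]
  exact congrArg (fun σ => Tm.subst σ t)
    (funext fun B => funext fun v => v.elim0)

theorem Tm.wk_rename {Δ Δ' : Ctx ν} {A : Ty ν} (t : Tm ([] : Ctx ν) A) (ρ : Ren Δ Δ') :
    (Tm.wk t (Δ := Δ)).rename ρ = Tm.wk t := by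
  unfold Tm.wk
  rw [Tm.rename_rename]
  exact congrArg (fun σ => Tm.rename σ t)
    (funext fun B => funext fun v => v.elim0)

theorem Tm.wk_nil {A : Ty ν} (t : Tm ([] : Ctx ν) A) : Tm.wk t = t := by
  unfold Tm.wk
  conv_rhs => rw [← Tm.rename_id t]
  exact congrArg (fun σ => Tm.rename σ t)
    (funext fun B => funext fun v => v.elim0)

theorem Tm.wk_subst1 {Δ : Ctx ν} {A B : Ty ν} (t : Tm ([] : Ctx ν) B) (u : Tm Δ A) :
    (Tm.wk t (Δ := A :: Δ)).subst1 u = Tm.wk t :=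
  Tm.wk_subst t _

theorem Eqv.rename {Γ Δ : Ctx ν} {A : Ty ν} {a b : Tm Γ A} (hab : Eqv a b) (ρ : Ren Γ Δ) :
    Eqv (a.rename ρ) (b.rename ρ) := by
  induction hab generalizing Δ with
  | refl a => exact .refl _
  | symm _ ih => exact .symm (ih ρ)
  | trans _ _ ih1 ih2 => exact .trans (ih1 ρ) (ih2 ρ)
  | congApp _ _ ih1 ih2 => exact .congApp (ih1 ρ) (ih2 ρ)
  | congLam _ ih => exact .congLam (ih _)
  | beta a b =>
      have h := Eqv.beta (a.rename ((Ren.ext ρ _))) (b.rename ρ)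
      have e : (a.rename (Ren.ext ρ _)).subst1 (b.rename ρ) = (a.subst1 b).rename ρ := by
        unfold Tm.subst1
        rw [Tm.subst_rename, Tm.rename_subst]
        exact congrArg (fun σ => Tm.subst σ a)
          (funext fun B => funext fun v => by cases v <;> rfl)
      rw [e] at h
      exact h
  | eta a =>
      have h := Eqv.eta (a.rename ρ)
      simp only [Tm.rename]
      rw [Tm.rename_rename] at h ⊢
      exact h

end Boiler
/-! ## Church numerals and basic combinators -/

theorem Tm.iter_rename {Γ Δ : Ctx Unit} {A : Ty Unit} (f : Tm Γ (Ty.arrow A A)) (x : Tm Γ A)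
    (n : ℕ) (ρ : Ren Γ Δ) :
    (Tm.iter f x n).rename ρ = Tm.iter (f.rename ρ) (x.rename ρ) n := by
  induction n with
  | zero => rfl
  | succ n ih => simp only [Tm.iter, Tm.rename, ih]

theorem Tm.iter_subst {Γ Δ : Ctx Unit} {A : Ty Unit} (f : Tm Γ (Ty.arrow A A)) (x : Tm Γ A)
    (n : ℕ) (σ : Subst Γ Δ) :
    (Tm.iter f x n).subst σ = Tm.iter (f.subst σ) (x.subst σ) n := by
  induction n with
  | zero => rfl
  | succ n ih => simp only [Tm.iter, Tm.subst, ih]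

theorem Eqv.iter_congr {Γ : Ctx Unit} {A : Ty Unit} {f f' : Tm Γ (Ty.arrow A A)}
    {x x' : Tm Γ A} (hf : Eqv f f') (hx : Eqv x x') (n : ℕ) :
    Eqv (Tm.iter f x n) (Tm.iter f' x' n) := by
  induction n with
  | zero => exact hx
  | succ n ih => exact .congApp hf ih

theorem wk_church {Γ : Ctx Unit} (i n : ℕ) :
    Tm.wk (church i n) (Δ := Γ) =
      Tm.lam (Tm.lam (Tm.iter (.var (.vs .vz)) (.var .vz) n)) := by
  unfold Tm.wk church
  simp only [Tm.rename, Tm.iter_rename]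
  rfl

theorem churchApp {Γ : Ctx Unit} (i n : ℕ) (f : Tm Γ (AT (i+1))) (x : Tm Γ (AT i)) :
    Eqv (.app (.app (Tm.wk (church i n)) f) x) (Tm.iter f x n) := by
  rw [wk_church]
  have h1 : Eqv (Tm.app (Tm.lam (Tm.lam (Tm.iter (.var (.vs .vz)) (.var .vz) n))) f)
      (Tm.lam (Tm.iter (f.rename (fun _ => Var.vs)) (.var .vz) n)) := by
    have h := Eqv.beta (Tm.lam (Tm.iter (Tm.var (.vs .vz)) (Tm.var .vz) n)) f
    have e : (Tm.lam (Tm.iter (Tm.var (.vs .vz)) (Tm.var .vz) n)).subst1 f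
        = Tm.lam (Tm.iter (f.rename (fun _ => Var.vs)) (.var .vz) n) := by
      unfold Tm.subst1
      simp only [Tm.subst, Tm.iter_subst]
      rfl
    rwa [e] at h
  have h2 : Eqv (Tm.app (Tm.lam (Tm.iter (f.rename (fun _ => Var.vs)) (.var .vz) n)) x)
      (Tm.iter f x n) := by
    have h := Eqv.beta (Tm.iter (f.rename (fun _ => Var.vs)) (Tm.var .vz) n) x
    have e : (Tm.iter (f.rename (fun _ => Var.vs)) (Tm.var .vz) n).subst1 x
        = Tm.iter f x n := by
      have e2 := Tm.rename_vs_subst1 f x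
      unfold Tm.subst1 at e2 ⊢
      simp only [Tm.iter_subst, Tm.subst, e2]
      rfl
    rwa [e] at h
  exact .trans (.congApp h1 (.refl x)) h2

/-- the K combinator -/
def kComb (A B : Ty Unit) : Tm [] (.arrow A (.arrow B A)) := .lam (.lam (.var (.vs .vz)))

theorem wk_kComb {Γ : Ctx Unit} (A B : Ty Unit) :
    Tm.wk (kComb A B) (Δ := Γ) = .lam (.lam (.var (.vs .vz))) := rfl

theorem k_red {Γ : Ctx Unit} {A B : Ty Unit} (a : Tm Γ A) (b : Tm Γ B) :
    Eqv (.app (.app (Tm.wk (kComb A B)) a) b) a := by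
  have h1 : Eqv (Tm.app (Tm.wk (kComb A B) (Δ := Γ)) a)
      (Tm.lam (a.rename (fun _ => Var.vs))) := by
    have h := Eqv.beta ((Tm.lam (Tm.var (Var.vs Var.vz)) : Tm (A :: Γ) (Ty.arrow B A))) a
    exact h
  have h2 : Eqv (Tm.app (Tm.lam (a.rename (fun _ => Var.vs))) b) a := by
    have h := Eqv.beta (a.rename (fun _ => Var.vs)) b
    rwa [Tm.rename_vs_subst1] at h
  exact .trans (.congApp h1 (.refl b)) h2

/-- the I combinator -/
def idComb (A : Ty Unit) : Tm [] (.arrow A A) := .lam (.var .vz)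

theorem id_red {Γ : Ctx Unit} {A : Ty Unit} (a : Tm Γ A) :
    Eqv (.app (Tm.wk (idComb A)) a) a :=
  Eqv.beta (Tm.var .vz) a

/-- lifting a term of base type to `A_m` by iterated constant functions -/
def liftOp {Γ : Ctx Unit} : (m : ℕ) → Tm Γ (AT 0) → Tm Γ (AT m)
  | 0, c => c
  | m+1, c => .app (Tm.wk (kComb (AT m) (AT m))) (liftOp m c)

theorem liftOp_rename {Γ Δ : Ctx Unit} (m : ℕ) (c : Tm Γ (AT 0)) (ρ : Ren Γ Δ) :
    (liftOp m c).rename ρ = liftOp m (c.rename ρ) := by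
  induction m with
  | zero => rfl
  | succ m ih =>
      show Tm.app ((Tm.wk (kComb (AT m) (AT m))).rename ρ) ((liftOp m c).rename ρ) = _
      rw [Tm.wk_rename, ih]
      rfl

theorem liftOp_subst {Γ Δ : Ctx Unit} (m : ℕ) (c : Tm Γ (AT 0)) (σ : Subst Γ Δ) :
    (liftOp m c).subst σ = liftOp m (c.subst σ) := by
  induction m with
  | zero => rfl
  | succ m ih =>
      show Tm.app ((Tm.wk (kComb (AT m) (AT m))).subst σ) ((liftOp m c).subst σ) = _
      rw [Tm.wk_subst, ih]
      rfl

theorem liftOp_congr {Γ : Ctx Unit} (m : ℕ) {c c' : Tm Γ (AT 0)} (h : Eqv c c') :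
    Eqv (liftOp m c) (liftOp m c') := by
  induction m with
  | zero => exact h
  | succ m ih => exact .congApp (.refl _) ih

/-- extracting a base-type value out of a lifted term -/
def extrOp {Γ : Ctx Unit} : (m : ℕ) → Tm Γ (AT m) → Tm Γ (AT 0) → Tm Γ (AT 0)
  | 0, r, _ => r
  | m+1, r, w => extrOp m (.app r (liftOp m w)) w

theorem extrOp_rename {Γ Δ : Ctx Unit} (m : ℕ) (r : Tm Γ (AT m)) (w : Tm Γ (AT 0))
    (ρ : Ren Γ Δ) : (extrOp m r w).rename ρ = extrOp m (r.rename ρ) (w.rename ρ) := by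
  induction m generalizing w with
  | zero => rfl
  | succ m ih => simp only [extrOp, ih, Tm.rename, liftOp_rename]

theorem extrOp_subst {Γ Δ : Ctx Unit} (m : ℕ) (r : Tm Γ (AT m)) (w : Tm Γ (AT 0))
    (σ : Subst Γ Δ) : (extrOp m r w).subst σ = extrOp m (r.subst σ) (w.subst σ) := by
  induction m generalizing w with
  | zero => rfl
  | succ m ih => simp only [extrOp, ih, Tm.subst, liftOp_subst]

theorem extrOp_congr : ∀ (m : ℕ) {Γ : Ctx Unit} {r r' : Tm Γ (AT m)} (w : Tm Γ (AT 0)),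
    Eqv r r' → Eqv (extrOp m r w) (extrOp m r' w)
  | 0, _, _, _, _, h => h
  | m+1, _, _, _, w, h => extrOp_congr m w (.congApp h (.refl _))

theorem extr_lift {Γ : Ctx Unit} (m : ℕ) (c w : Tm Γ (AT 0)) :
    Eqv (extrOp m (liftOp m c) w) c := by
  induction m with
  | zero => exact .refl c
  | succ m ih =>
      refine .trans (extrOp_congr m w ?_) ih
      exact k_red (liftOp m c) (liftOp m w)

/-- conditional (zero-test) at the base type: if `v ≡ 0` then `x` else `y` -/
def cifP {Γ : Ctx Unit} (ℓ : ℕ) (v : Tm Γ (NT ℓ)) (x y : Tm Γ (AT 0)) : Tm Γ (AT 0) :=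
  extrOp ℓ (.app (.app v (.app (Tm.wk (kComb (AT ℓ) (AT ℓ))) (liftOp ℓ y))) (liftOp ℓ x)) x

theorem cifP_rename {Γ Δ : Ctx Unit} (ℓ : ℕ) (v : Tm Γ (NT ℓ)) (x y : Tm Γ (AT 0))
    (ρ : Ren Γ Δ) :
    (cifP ℓ v x y).rename ρ = cifP ℓ (v.rename ρ) (x.rename ρ) (y.rename ρ) := by
  unfold cifP
  rw [extrOp_rename]
  show extrOp ℓ (.app (.app (v.rename ρ)
      (.app ((Tm.wk (kComb (AT ℓ) (AT ℓ))).rename ρ) ((liftOp ℓ y).rename ρ)))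
      ((liftOp ℓ x).rename ρ)) (x.rename ρ) = _
  rw [Tm.wk_rename]
  simp only [liftOp_rename]

theorem cifP_subst {Γ Δ : Ctx Unit} (ℓ : ℕ) (v : Tm Γ (NT ℓ)) (x y : Tm Γ (AT 0))
    (σ : Subst Γ Δ) :
    (cifP ℓ v x y).subst σ = cifP ℓ (v.subst σ) (x.subst σ) (y.subst σ) := by
  unfold cifP
  rw [extrOp_subst]
  show extrOp ℓ (.app (.app (v.subst σ)
      (.app ((Tm.wk (kComb (AT ℓ) (AT ℓ))).subst σ) ((liftOp ℓ y).subst σ)))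
      ((liftOp ℓ x).subst σ)) (x.subst σ) = _
  rw [Tm.wk_subst]
  simp only [liftOp_subst]

theorem cifP_zero {Γ : Ctx Unit} (ℓ : ℕ) {v : Tm Γ (NT ℓ)} (x y : Tm Γ (AT 0))
    (hv : Eqv v (Tm.wk (church ℓ 0))) : Eqv (cifP ℓ v x y) x := by
  unfold cifP
  refine .trans (extrOp_congr ℓ x ?_) (extr_lift ℓ x x)
  refine .trans (.congApp (.congApp hv (.refl _)) (.refl _)) ?_
  exact churchApp ℓ 0 _ _

theorem cifP_succ {Γ : Ctx Unit} (ℓ d : ℕ) {v : Tm Γ (NT ℓ)} (x y : Tm Γ (AT 0))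
    (hv : Eqv v (Tm.wk (church ℓ (d+1)))) : Eqv (cifP ℓ v x y) y := by
  unfold cifP
  refine .trans (extrOp_congr ℓ x ?_) (extr_lift ℓ y x)
  refine .trans (.congApp (.congApp hv (.refl _)) (.refl _)) ?_
  refine .trans (churchApp ℓ (d+1) _ _) ?_
  exact k_red (liftOp ℓ y) _

/-- pointwise conditional at an arbitrary type -/
def cifT {Γ : Ctx Unit} : (D : Ty Unit) → (ℓ : ℕ) → Tm Γ (NT ℓ) → Tm Γ D → Tm Γ D → Tm Γ D
  | .atom _, ℓ, v, a, b => cifP ℓ v a b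
  | .arrow D₁ D₂, ℓ, v, a, b =>
      .lam (cifT D₂ ℓ (v.rename (fun _ => Var.vs))
        (.app (a.rename (fun _ => Var.vs)) (.var .vz))
        (.app (b.rename (fun _ => Var.vs)) (.var .vz)))

theorem cifT_subst {Γ Δ : Ctx Unit} (D : Ty Unit) (ℓ : ℕ) (v : Tm Γ (NT ℓ)) (a b : Tm Γ D)
    (σ : Subst Γ Δ) :
    (cifT D ℓ v a b).subst σ = cifT D ℓ (v.subst σ) (a.subst σ) (b.subst σ) := by
  induction D generalizing Γ Δ with
  | atom u => exact cifP_subst ℓ v a b σ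
  | arrow D₁ D₂ ih₁ ih₂ =>
      simp only [cifT, Tm.subst, ih₂, Tm.rename_vs_subst_ext]
      rfl

theorem cifT_zero {Γ : Ctx Unit} (D : Ty Unit) (ℓ : ℕ) {v : Tm Γ (NT ℓ)} (a b : Tm Γ D)
    (hv : Eqv v (Tm.wk (church ℓ 0))) : Eqv (cifT D ℓ v a b) a := by
  induction D generalizing Γ with
  | atom u => exact cifP_zero ℓ a b hv
  | arrow D₁ D₂ ih₁ ih₂ =>
      refine .trans (.congLam ?_) (Eqv.eta a)
      refine ih₂ _ _ ?_
      have h := hv.rename (fun (B : Ty Unit) => Var.vs (B := D₁))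
      rwa [Tm.wk_rename] at h

theorem cifT_succ {Γ : Ctx Unit} (D : Ty Unit) (ℓ d : ℕ) {v : Tm Γ (NT ℓ)} (a b : Tm Γ D)
    (hv : Eqv v (Tm.wk (church ℓ (d+1)))) : Eqv (cifT D ℓ v a b) b := by
  induction D generalizing Γ with
  | atom u => exact cifP_succ ℓ d a b hv
  | arrow D₁ D₂ ih₁ ih₂ =>
      refine .trans (.congLam ?_) (Eqv.eta b)
      refine ih₂ _ _ ?_
      have h := hv.rename (fun (B : Ty Unit) => Var.vs (B := D₁))
      rwa [Tm.wk_rename] at h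
/-! ## The predecessor -/

/-- beta with explicitly provided reduct -/
theorem Eqv.beta' {ν : Type} {Γ : Ctx ν} {A B : Ty ν} (a : Tm (A :: Γ) B) (b : Tm Γ A)
    {c : Tm Γ B} (h : a.subst1 b = c) : Eqv (.app (.lam a) b) c := h ▸ Eqv.beta a b

theorem Tm.ren_vs_ren_ext {ν : Type} {Γ Δ : Ctx ν} {A B : Ty ν} (t : Tm Γ B) (ρ : Ren Γ Δ) :
    (t.rename (fun _ => Var.vs)).rename (Ren.ext ρ A) = (t.rename ρ).rename (fun _ => Var.vs) := by
  rw [Tm.rename_rename, Tm.rename_rename]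
  rfl

theorem Tm.ren_vs2_subst_ext2 {ν : Type} {Γ Δ : Ctx ν} {A B C : Ty ν} (t : Tm Γ C)
    (σ : Subst Γ Δ) :
    (t.rename (fun _ v => Var.vs (Var.vs v))).subst (Subst.ext (Subst.ext σ A) B) =
      (t.subst σ).rename (fun _ v => Var.vs (Var.vs v)) := by
  rw [Tm.subst_rename, Tm.rename_subst]
  refine congrArg (fun τ => Tm.subst τ t) (funext fun X => funext fun v => ?_)
  show ((σ X v).rename (fun _ => Var.vs)).rename (fun _ => Var.vs) = _
  rw [Tm.rename_rename]

theorem Tm.ren_vs2_ren_ext2 {ν : Type} {Γ Δ : Ctx ν} {A B C : Ty ν} (t : Tm Γ C)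
    (ρ : Ren Γ Δ) :
    (t.rename (fun _ v => Var.vs (Var.vs v))).rename (Ren.ext (Ren.ext ρ A) B) =
      (t.rename ρ).rename (fun _ v => Var.vs (Var.vs v)) := by
  rw [Tm.rename_rename, Tm.rename_rename]
  rfl

section Pred
variable (m : ℕ)

/-- `E`-encoding of an element of `W = A_{m+2} → A_{m+1}` as an element of `A_{m+3}` -/
def eEG {Δ : Ctx Unit} (w : Tm Δ (.arrow (AT (m+2)) (AT (m+1)))) : Tm Δ (AT (m+3)) :=
  .lam (.app (Tm.wk (kComb (AT (m+1)) (AT (m+1))))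
    (.app (w.rename (fun _ => Var.vs)) (.var .vz)))

/-- the term `step^n(base)`, with designated terms `x : A_{m+1}`, `f : A_{m+2}` -/
def wWG {Δ : Ctx Unit} (x : Tm Δ (AT (m+1))) (f : Tm Δ (AT (m+2))) :
    ℕ → Tm Δ (.arrow (AT (m+2)) (AT (m+1)))
  | 0 => .lam (x.rename (fun _ => Var.vs))
  | n+1 => .lam (.app (.var .vz)
      (.app ((wWG x f n).rename (fun _ => Var.vs)) (f.rename (fun _ => Var.vs))))

def stepG {Δ : Ctx Unit} (f : Tm Δ (AT (m+2))) : Tm Δ (.arrow (AT (m+3)) (AT (m+3))) :=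
  .lam (.lam (.app (Tm.wk (kComb (AT (m+1)) (AT (m+1))))
    (.app (.var .vz)
      (.app (.app (.var (.vs .vz)) (f.rename (fun _ v => Var.vs (Var.vs v))))
        (Tm.wk (idComb (AT m)))))))

def baseG {Δ : Ctx Unit} (x : Tm Δ (AT (m+1))) : Tm Δ (AT (m+3)) :=
  .lam (.app (Tm.wk (kComb (AT (m+1)) (AT (m+1)))) (x.rename (fun _ => Var.vs)))

/-- the predecessor operation -/
def predOp {Γ : Ctx Unit} (v : Tm Γ (NT (m+3))) : Tm Γ (NT (m+1)) :=
  .lam (.lam (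
    .app (.app
      (.app (.app (v.rename (fun _ w => Var.vs (Var.vs w)))
        (stepG m (.var (.vs .vz)))) (baseG m (.var .vz)))
      (Tm.wk (idComb (AT (m+1)))))
    (Tm.wk (idComb (AT m)))))

variable {Δ : Ctx Unit}

theorem eEG_rename {Δ' : Ctx Unit} (w : Tm Δ (.arrow (AT (m+2)) (AT (m+1)))) (ρ : Ren Δ Δ') :
    (eEG m w).rename ρ = eEG m (w.rename ρ) := by
  unfold eEG
  show Tm.lam (.app ((Tm.wk _).rename _) (.app ((w.rename _).rename _) (.var .vz))) = _
  rw [Tm.wk_rename, Tm.ren_vs_ren_ext]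

theorem eEG_subst {Δ' : Ctx Unit} (w : Tm Δ (.arrow (AT (m+2)) (AT (m+1)))) (σ : Subst Δ Δ') :
    (eEG m w).subst σ = eEG m (w.subst σ) := by
  unfold eEG
  show Tm.lam (.app ((Tm.wk _).subst _) (.app ((w.rename _).subst _) (.var .vz))) = _
  rw [Tm.wk_subst, Tm.rename_vs_subst_ext]

theorem wWG_rename {Δ' : Ctx Unit} (x : Tm Δ (AT (m+1))) (f : Tm Δ (AT (m+2))) (n : ℕ)
    (ρ : Ren Δ Δ') : (wWG m x f n).rename ρ = wWG m (x.rename ρ) (f.rename ρ) n := by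
  induction n with
  | zero =>
      show Tm.lam ((x.rename _).rename _) = _
      rw [Tm.ren_vs_ren_ext]
      rfl
  | succ n ih =>
      show Tm.lam (.app (.var .vz) (.app (((wWG m x f n).rename _).rename _)
        ((f.rename _).rename _))) = _
      rw [Tm.ren_vs_ren_ext, Tm.ren_vs_ren_ext, ih]
      rfl

theorem wWG_subst {Δ' : Ctx Unit} (x : Tm Δ (AT (m+1))) (f : Tm Δ (AT (m+2))) (n : ℕ)
    (σ : Subst Δ Δ') : (wWG m x f n).subst σ = wWG m (x.subst σ) (f.subst σ) n := by
  induction n with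
  | zero =>
      show Tm.lam ((x.rename _).subst _) = _
      rw [Tm.rename_vs_subst_ext]
      rfl
  | succ n ih =>
      show Tm.lam (.app (.var .vz) (.app (((wWG m x f n).rename _).subst _)
        ((f.rename _).subst _))) = _
      rw [Tm.rename_vs_subst_ext, Tm.rename_vs_subst_ext, ih]
      rfl

theorem stepG_subst {Δ' : Ctx Unit} (f : Tm Δ (AT (m+2))) (σ : Subst Δ Δ') :
    (stepG m f).subst σ = stepG m (f.subst σ) := by
  unfold stepG
  show Tm.lam (.lam (.app ((Tm.wk _).subst _) (.app (.var .vz) (.app (.app (.var (.vs .vz))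
    ((f.rename _).subst _)) ((Tm.wk _).subst _))))) = _
  rw [Tm.wk_subst, Tm.wk_subst, Tm.ren_vs2_subst_ext2]

theorem baseG_subst {Δ' : Ctx Unit} (x : Tm Δ (AT (m+1))) (σ : Subst Δ Δ') :
    (baseG m x).subst σ = baseG m (x.subst σ) := by
  unfold baseG
  show Tm.lam (.app ((Tm.wk _).subst _) ((x.rename _).subst _)) = _
  rw [Tm.wk_subst, Tm.rename_vs_subst_ext]

theorem predOp_subst {Γ Γ' : Ctx Unit} (v : Tm Γ (NT (m+3))) (σ : Subst Γ Γ') :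
    (predOp m v).subst σ = predOp m (v.subst σ) := by
  unfold predOp
  show Tm.lam (.lam (.app (.app (.app (.app ((v.rename _).subst _)
      ((stepG m (.var (.vs .vz))).subst _)) ((baseG m (.var .vz)).subst _))
      ((Tm.wk _).subst _)) ((Tm.wk _).subst _))) = _
  rw [Tm.wk_subst, Tm.wk_subst, stepG_subst, baseG_subst, Tm.ren_vs2_subst_ext2]
  rfl

/-- beta-reduction lemma for `eEG` -/
theorem eEG_red (w : Tm Δ (.arrow (AT (m+2)) (AT (m+1)))) (u : Tm Δ (AT (m+2))) :
    Eqv (.app (eEG m w) u)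
      (.app (Tm.wk (kComb (AT (m+1)) (AT (m+1)))) (.app w u)) := by
  refine Eqv.beta' _ _ ?_
  show Tm.app ((Tm.wk _).subst1 u) (.app ((w.rename _).subst1 u) ((Tm.var .vz).subst1 u)) = _
  rw [Tm.wk_subst1, Tm.rename_vs_subst1]
  rfl

theorem wWG0_red (x : Tm Δ (AT (m+1))) (f : Tm Δ (AT (m+2))) (u : Tm Δ (AT (m+2))) :
    Eqv (.app (wWG m x f 0) u) x := by
  refine Eqv.beta' _ _ ?_
  exact Tm.rename_vs_subst1 x u

theorem wWGs_red (x : Tm Δ (AT (m+1))) (f : Tm Δ (AT (m+2))) (n : ℕ) (u : Tm Δ (AT (m+2))) :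
    Eqv (.app (wWG m x f (n+1)) u) (.app u (.app (wWG m x f n) f)) := by
  refine Eqv.beta' _ _ ?_
  show Tm.app ((Tm.var .vz).subst1 u) (.app (((wWG m x f n).rename _).subst1 u)
    ((f.rename _).subst1 u)) = _
  rw [Tm.rename_vs_subst1, Tm.rename_vs_subst1]
  rfl

theorem stepG_red (f : Tm Δ (AT (m+2))) (G : Tm Δ (AT (m+3))) :
    Eqv (.app (stepG m f) G)
      (.lam (.app (Tm.wk (kComb (AT (m+1)) (AT (m+1))))
        (.app (.var .vz)
          (.app (.app (G.rename (fun _ => Var.vs)) (f.rename (fun _ => Var.vs)))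
            (Tm.wk (idComb (AT m))))))) := by
  refine Eqv.beta' _ _ ?_
  show Tm.lam (.app ((Tm.wk _).subst _) (.app (.var .vz) (.app (.app
      ((Tm.var (.vs .vz)).subst (Subst.ext (Subst.cons G (fun _ v => .var v)) _))
      ((f.rename _).subst (Subst.ext (Subst.cons G (fun _ v => .var v)) _)))
      ((Tm.wk _).subst _)))) = _
  rw [Tm.wk_subst, Tm.wk_subst]
  have h1 : (Tm.var (Var.vs Var.vz)).subst
      (Subst.ext (Subst.cons G (fun _ v => Tm.var v)) (AT (m+2))) =
      G.rename (fun _ => Var.vs) := rfl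
  have h2 : (f.rename (fun _ v => Var.vs (Var.vs v))).subst
      (Subst.ext (Subst.cons G (fun _ v => Tm.var v)) (Ty.arrow (AT (m+1)) (AT (m+1)))) =
      f.rename (fun _ => Var.vs) := by
    rw [Tm.subst_rename]
    exact (Tm.rename_eq_subst f _).symm
  have h1' : (Tm.var (Var.vs Var.vz)).subst
      (Subst.ext (Subst.cons G (fun _ v => Tm.var v)) (Ty.arrow (AT (m+1)) (AT (m+1)))) =
      G.rename (fun _ => Var.vs) := rfl
  rw [h1', h2]

theorem baseG_eqv_eE (x : Tm Δ (AT (m+1))) (f : Tm Δ (AT (m+2))) :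
    Eqv (baseG m x) (eEG m (wWG m x f 0)) := by
  unfold baseG eEG
  refine Eqv.symm (.congLam (.congApp (.refl _) ?_))
  rw [wWG_rename]
  exact wWG0_red m _ _ _

/-- Main iteration invariant for the predecessor. -/
theorem iter_step_eE (x : Tm Δ (AT (m+1))) (f : Tm Δ (AT (m+2))) (n : ℕ) :
    Eqv (Tm.iter (stepG m f) (baseG m x) n) (eEG m (wWG m x f n)) := by
  induction n with
  | zero => exact baseG_eqv_eE m x f
  | succ n ih =>
      refine .trans (.congApp (.refl (stepG m f)) ih) ?_
      refine .trans (stepG_red m f (eEG m (wWG m x f n))) ?_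
      refine Eqv.congLam (.congApp (.refl _) ?_)
      refine Eqv.trans (b := .app (.var .vz)
          (.app (wWG m (x.rename (fun _ => Var.vs)) (f.rename (fun _ => Var.vs)) n)
            (f.rename (fun _ => Var.vs))))
        (Eqv.congApp (.refl (.var .vz)) ?_) (Eqv.symm ?_)
      · rw [eEG_rename, wWG_rename]
        refine .trans (.congApp (eEG_red m _ _) (.refl _)) ?_
        exact k_red _ _
      · rw [wWG_rename]
        exact wWGs_red m _ _ n (.var .vz)

theorem wWG_app_f (x : Tm Δ (AT (m+1))) (f : Tm Δ (AT (m+2))) (n : ℕ) :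
    Eqv (.app (wWG m x f n) f) (Tm.iter f x n) := by
  induction n with
  | zero => exact wWG0_red m x f f
  | succ n ih =>
      refine .trans (wWGs_red m x f n f) ?_
      exact .congApp (.refl f) ih

/-- Correctness of the predecessor. -/
theorem predOp_church {Γ : Ctx Unit} (d : ℕ) {v : Tm Γ (NT (m+3))}
    (hv : Eqv v (Tm.wk (church (m+3) d))) :
    Eqv (predOp m v) (Tm.wk (church (m+1) (d-1))) := by
  rw [wk_church]
  unfold predOp
  refine Eqv.congLam (Eqv.congLam ?_)
  have hv2 : Eqv (v.rename (fun (X : Ty Unit) (w : Var Γ X) =>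
      (Var.vs (Var.vs w) : Var (AT (m+1) :: AT (m+2) :: Γ) X)))
      (Tm.wk (church (m+3) d)) := by
    have h := hv.rename (fun (X : Ty Unit) (w : Var Γ X) =>
      (Var.vs (Var.vs w) : Var (AT (m+1) :: AT (m+2) :: Γ) X))
    rwa [Tm.wk_rename] at h
  refine .trans (.congApp (.congApp (.congApp (.congApp hv2 (.refl _)) (.refl _))
    (.refl _)) (.refl _)) ?_
  refine .trans (.congApp (.congApp
    (churchApp (m+3) d (stepG m (.var (.vs .vz))) (baseG m (.var .vz))) (.refl _))
    (.refl _)) ?_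
  refine .trans (.congApp (.congApp
    (iter_step_eE m (.var .vz) (.var (.vs .vz)) d) (.refl _)) (.refl _)) ?_
  refine .trans (.congApp (eEG_red m _ _) (.refl _)) ?_
  refine .trans (k_red _ _) ?_
  cases d with
  | zero => exact wWG0_red m _ _ _
  | succ n =>
      refine .trans (wWGs_red m _ _ n _) ?_
      refine .trans (id_red _) ?_
      exact wWG_app_f m _ _ n

end Pred
/-! ## Lowering Church numerals by one level -/

section Low
variable (ℓ : ℕ)

/-- `compTm n = λy. fⁿ(y)` in a context of the shape `x :: f :: Γ` -/
def compTm {Γ : Ctx Unit} (n : ℕ) : Tm (AT ℓ :: AT (ℓ+1) :: Γ) (AT (ℓ+1)) :=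
  .lam (Tm.iter (.var (.vs (.vs .vz))) (.var .vz) n)

/-- the `G` combinator `λ g y. f (g y)` in context `y? :: …`: context `x :: f :: Γ` -/
def gTm {Γ : Ctx Unit} : Tm (AT ℓ :: AT (ℓ+1) :: Γ) (AT (ℓ+2)) :=
  .lam (.lam (.app (.var (.vs (.vs (.vs .vz)))) (.app (.var (.vs .vz)) (.var .vz))))

/-- lowering a Church numeral one level down -/
def lowOp {Γ : Ctx Unit} (v : Tm Γ (NT (ℓ+1))) : Tm Γ (NT ℓ) :=
  .lam (.lam (.app (.app (.app (v.rename (fun _ w => Var.vs (Var.vs w))) (gTm ℓ))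
    (Tm.wk (idComb (AT ℓ)))) (.var .vz)))

theorem lowOp_subst {Γ Γ' : Ctx Unit} (v : Tm Γ (NT (ℓ+1))) (σ : Subst Γ Γ') :
    (lowOp ℓ v).subst σ = lowOp ℓ (v.subst σ) := by
  unfold lowOp gTm
  show Tm.lam (.lam (.app (.app (.app ((v.rename _).subst _) _) ((Tm.wk _).subst _))
    (.var .vz))) = _
  rw [Tm.wk_subst, Tm.ren_vs2_subst_ext2]
  rfl

theorem gTm_red {Γ : Ctx Unit} (u : Tm (AT ℓ :: AT (ℓ+1) :: Γ) (AT (ℓ+1))) :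
    Eqv (.app (gTm ℓ) u)
      (.lam (.app (.var (.vs (.vs .vz))) (.app (u.rename (fun _ => Var.vs)) (.var .vz)))) := by
  refine Eqv.beta' _ _ ?_
  rfl

theorem iter_g_comp {Γ : Ctx Unit} (n : ℕ) :
    Eqv (Tm.iter (gTm ℓ (Γ := Γ)) (Tm.wk (idComb (AT ℓ))) n) (compTm ℓ n) := by
  induction n with
  | zero => exact .refl _
  | succ n ih =>
      refine .trans (.congApp (.refl (gTm ℓ)) ih) ?_
      refine .trans (gTm_red ℓ (compTm ℓ n)) ?_
      refine Eqv.congLam (.congApp (.refl _) ?_)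
      have e : ((compTm ℓ n (Γ := Γ)).rename (fun _ => Var.vs) :
            Tm (AT ℓ :: AT ℓ :: AT (ℓ+1) :: Γ) (AT (ℓ+1))) =
          Tm.lam (Tm.iter (.var (.vs (.vs (.vs .vz)))) (.var .vz) n) := by
        unfold compTm
        show Tm.lam ((Tm.iter _ _ n).rename _) = _
        rw [Tm.iter_rename]
        rfl
      rw [e]
      refine Eqv.beta' _ _ ?_
      unfold Tm.subst1
      rw [Tm.iter_subst]
      rfl

theorem lowOp_church {Γ : Ctx Unit} (d : ℕ) {v : Tm Γ (NT (ℓ+1))}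
    (hv : Eqv v (Tm.wk (church (ℓ+1) d))) :
    Eqv (lowOp ℓ v) (Tm.wk (church ℓ d)) := by
  rw [wk_church]
  unfold lowOp
  refine Eqv.congLam (Eqv.congLam ?_)
  have hv2 : Eqv (v.rename (fun (X : Ty Unit) (w : Var Γ X) =>
      (Var.vs (Var.vs w) : Var (AT ℓ :: AT (ℓ+1) :: Γ) X)))
      (Tm.wk (church (ℓ+1) d)) := by
    have h := hv.rename (fun (X : Ty Unit) (w : Var Γ X) =>
      (Var.vs (Var.vs w) : Var (AT ℓ :: AT (ℓ+1) :: Γ) X))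
    rwa [Tm.wk_rename] at h
  refine .trans (.congApp (.congApp (.congApp hv2 (.refl _)) (.refl _)) (.refl _)) ?_
  refine .trans (.congApp (churchApp (ℓ+1) d (gTm ℓ) (Tm.wk (idComb (AT ℓ)))) (.refl _)) ?_
  refine .trans (.congApp (iter_g_comp ℓ d) (.refl _)) ?_
  unfold compTm
  refine Eqv.beta' _ _ ?_
  unfold Tm.subst1
  rw [Tm.iter_subst]
  rfl

end Low
/-! ## Iterated lowering and the digit decision chain -/

def lowIter {Γ : Ctx Unit} (ℓ : ℕ) : (k : ℕ) → Tm Γ (NT (ℓ + k)) → Tm Γ (NT ℓ)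
  | 0, v => v
  | k+1, v => lowIter ℓ k (lowOp (ℓ + k) v)

theorem lowIter_subst {Γ Γ' : Ctx Unit} (ℓ k : ℕ) (v : Tm Γ (NT (ℓ + k))) (σ : Subst Γ Γ') :
    (lowIter ℓ k v).subst σ = lowIter ℓ k (v.subst σ) := by
  induction k with
  | zero => rfl
  | succ k ih => simp only [lowIter, ih, lowOp_subst]

theorem lowIter_church {Γ : Ctx Unit} (ℓ k d : ℕ) {v : Tm Γ (NT (ℓ + k))}
    (hv : Eqv v (Tm.wk (church (ℓ + k) d))) :
    Eqv (lowIter ℓ k v) (Tm.wk (church ℓ d)) := by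
  induction k with
  | zero => exact hv
  | succ k ih => exact ih (lowOp_church (ℓ + k) d hv)

/-- sequential zero-tests: branches `cont c, cont (c+1), …, cont (c+r)` -/
def chainOp {Γ : Ctx Unit} (D : Ty Unit) (cont : ℕ → Tm Γ D) :
    (c : ℕ) → (r : ℕ) → Tm Γ (NT (2*r+1)) → Tm Γ D
  | c, 0, _ => cont c
  | c, r+1, v => cifT D (2*(r+1)+1) v (cont c)
      (chainOp D cont (c+1) r (predOp (2*r) v))

theorem chainOp_subst {Γ Γ' : Ctx Unit} (D : Ty Unit) (cont : ℕ → Tm Γ D)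
    (c r : ℕ) (v : Tm Γ (NT (2*r+1))) (σ : Subst Γ Γ') :
    (chainOp D cont c r v).subst σ =
      chainOp D (fun n => (cont n).subst σ) c r (v.subst σ) := by
  induction r generalizing c with
  | zero => rfl
  | succ r ih => simp only [chainOp, cifT_subst, predOp_subst, ih]

theorem chainOp_correct {Γ : Ctx Unit} (D : Ty Unit) (cont : ℕ → Tm Γ D) :
    ∀ (r c d : ℕ) (v : Tm Γ (NT (2*r+1))), c ≤ d → d ≤ c + r →
      Eqv v (Tm.wk (church (2*r+1) (d - c))) →
      Eqv (chainOp D cont c r v) (cont d) := by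
  intro r
  induction r with
  | zero =>
      intro c d v hcd hdc hv
      have : c = d := by omega
      subst this
      exact .refl _
  | succ r ih =>
      intro c d v hcd hdc hv
      rcases Nat.eq_or_lt_of_le hcd with he | hlt
      · subst he
        have hv0 : Eqv v (Tm.wk (church (2*(r+1)+1) 0)) := by
          have : c - c = 0 := by omega
          rwa [this] at hv
        exact cifT_zero D _ _ _ hv0
      · have he : d - c = (d - (c+1)) + 1 := by omega
        rw [he] at hv
        refine .trans (cifT_succ D _ (d - (c+1)) _ _ hv) ?_
        refine ih (c+1) d _ (by omega) (by omega) ?_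
        have hp := predOp_church (2*r) (d - (c+1) + 1) hv
        have : d - (c+1) + 1 - 1 = d - (c+1) := by omega
        rwa [this] at hp
/-! ## The decision tree -/

def treeOp {Γ : Ctx Unit} (Bi D : Ty Unit) (r k : ℕ) (x : Tm Γ Bi)
    (leaf : List ℕ → Tm [] D) :
    (qs : List (Tm [] (Ty.arrow Bi (NT (2*r+1+k))))) → (acc : List ℕ) → Tm Γ D
  | [], acc => Tm.wk (leaf acc)
  | q :: qs, acc => chainOp D (fun d => treeOp Bi D r k x leaf qs (acc ++ [d])) 0 r
      (lowIter (2*r+1) k (.app (Tm.wk q) x))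

theorem treeOp_subst {Γ Γ' : Ctx Unit} (Bi D : Ty Unit) (r k : ℕ) (x : Tm Γ Bi)
    (leaf : List ℕ → Tm [] D) (qs : List (Tm [] (Ty.arrow Bi (NT (2*r+1+k)))))
    (acc : List ℕ) (σ : Subst Γ Γ') :
    (treeOp Bi D r k x leaf qs acc).subst σ = treeOp Bi D r k (x.subst σ) leaf qs acc := by
  induction qs generalizing acc with
  | nil => exact Tm.wk_subst _ _
  | cons q qs ih =>
      show (chainOp D _ 0 r _).subst σ = _
      rw [chainOp_subst, lowIter_subst]
      show chainOp D _ 0 r (lowIter _ k (.app ((Tm.wk q).subst σ) (x.subst σ))) = _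
      rw [Tm.wk_subst]
      show _ = chainOp D (fun d => treeOp Bi D r k (x.subst σ) leaf qs (acc ++ [d])) 0 r
        (lowIter (2*r+1) k (.app (Tm.wk q) (x.subst σ)))
      exact congrArg (fun cont => chainOp D cont 0 r _) (funext fun d => ih (acc ++ [d]))

/-- correctness of the tree: it reduces to the leaf indexed by the digits of `ψ` -/
theorem treeOp_correct (h : ℕ) {B D : Ty Unit} (r k : ℕ) (hhr : h ≤ r + 1)
    (ψ : interp h B) (b : Tm [] (B.substA (subN (2*r+1+k))))
    (hb : iDefines h (2*r+1+k) B ψ b) (leaf : List ℕ → Tm [] D) :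
    ∀ (qps : List ((interp h B → Fin h) ×
        Tm [] (Ty.arrow (B.substA (subN (2*r+1+k))) (NT (2*r+1+k))))),
      (∀ pq ∈ qps, iDefines h (2*r+1+k) (.arrow B (.atom ())) pq.1 pq.2) →
      ∀ acc : List ℕ,
        Eqv (treeOp (B.substA (subN (2*r+1+k))) D r k b leaf (qps.map Prod.snd) acc)
          (Tm.wk (leaf (acc ++ qps.map (fun pq => (pq.1 ψ).val)))) := by
  intro qps
  induction qps with
  | nil =>
      intro _ acc
      simp only [List.map_nil, List.append_nil]
      exact .refl _
  | cons pq qps ih =>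
      intro hq acc
      show Eqv (chainOp D _ 0 r _) _
      have hv : Eqv (lowIter (2*r+1) k (.app (Tm.wk pq.2) b))
          (Tm.wk (church (2*r+1) ((pq.1 ψ).val - 0))) := by
        rw [Nat.sub_zero]
        refine lowIter_church _ _ _ ?_
        rw [Tm.wk_nil]
        have hdef := hq pq (List.mem_cons_self (a := pq) (l := qps)) ψ b hb
        rw [Tm.wk_nil]
        exact hdef
      refine .trans (chainOp_correct D _ r 0 ((pq.1 ψ).val) _ (Nat.zero_le _)
        (by have := (pq.1 ψ).isLt; omega) hv) ?_
      have := ih (fun pq' hpq' => hq pq' (List.mem_cons_of_mem _ hpq')) (acc ++ [(pq.1 ψ).val])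
      rw [List.append_assoc] at this
      simpa using this
/-! ## Semantics: finiteness of the type structure, separation, main theorem -/

/-- Fintype, decidable equality, and a default element for each `P`-type. -/
def interpFD (h : ℕ) (hpos : 0 < h) : ∀ A : Ty Unit,
    Fintype (interp h A) × DecidableEq (interp h A) × interp h A
  | .atom _ => ⟨inferInstanceAs (Fintype (Fin h)), inferInstanceAs (DecidableEq (Fin h)),
      ⟨0, hpos⟩⟩
  | .arrow B C =>
      let iB := interpFD h hpos B
      let iC := interpFD h hpos C
      letI fB := iB.1
      letI dB := iB.2.1
      letI fC := iC.1
      letI dC := iC.2.1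
      ⟨Pi.instFintype, fun f g => Fintype.decidablePiFintype f g, fun _ => iC.2.2⟩

theorem iDefines_congr (h i : ℕ) : ∀ (A : Ty Unit) (φ : interp h A)
    {t t' : Tm [] (A.substA (subN i))}, Eqv t t' →
    iDefines h i A φ t → iDefines h i A φ t'
  | .atom _, φ, _, _, e, hd => .trans (.symm e) hd
  | .arrow B C, φ, _, _, e, hd => fun ψ b hb =>
      iDefines_congr h i C (φ ψ) (.congApp e (.refl b)) (hd ψ b hb)

def MainP (h : ℕ) (A : Ty Unit) : Prop :=
  ∀ φ : interp h A, ∃ κ : ℕ, ∀ i : ℕ, κ ≤ i →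
    ∃ t : Tm [] (A.substA (subN i)), iDefines h i A φ t

def SepData (h : ℕ) (B : Ty Unit) : Prop :=
  ∃ ps : List (interp h B → Fin h),
    (∀ ψ ψ' : interp h B, (∀ P ∈ ps, P ψ = P ψ') → ψ = ψ') ∧
    ∃ κ : ℕ, ∀ i : ℕ, κ ≤ i → ∀ P ∈ ps,
      ∃ q : Tm [] (Ty.arrow (B.substA (subN i)) (NT i)),
        iDefines h i (.arrow B (.atom ())) P q

def Ty.size : Ty Unit → ℕ
  | .atom _ => 1
  | .arrow B C => B.size + C.size + 1

theorem sep_of (h : ℕ) (hh : 2 ≤ h) :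
    ∀ B : Ty Unit, (∀ B' : Ty Unit, B'.size < B.size → MainP h B') → SepData h B := by
  intro B
  induction B with
  | atom u =>
      intro _
      refine ⟨[fun n => n], ?_, 0, ?_⟩
      · intro ψ ψ' hagree
        exact hagree _ (List.mem_singleton_self _)
      · intro i _ P hP
        have hPid : P = fun n => n := by simpa using List.mem_singleton.mp hP
        subst hPid
        refine ⟨idComb (NT i), ?_⟩
        intro n b hb
        have hi := id_red (A := NT i) b
        rw [Tm.wk_nil] at hi
        exact .trans hi hb
  | arrow B₁ B₂ ih₁ ih₂ =>
      intro hM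
      obtain ⟨ps₂, inj₂, κ₂, hq₂⟩ := ih₂ (fun B' hB' => hM B' (by
        simp only [Ty.size]; omega))
      have hMB₁ : MainP h B₁ := hM B₁ (by simp only [Ty.size]; omega)
      choose κf hκf using hMB₁
      choose tf htf using hκf
      letI fB := (interpFD h (by omega) B₁).1
      refine ⟨fB.elems.toList.flatMap (fun χ => ps₂.map (fun P => fun ψ => P (ψ χ))), ?_,
        κ₂ ⊔ Finset.univ.sup κf, ?_⟩
      · intro ψ ψ' hagree
        funext χ
        refine inj₂ (ψ χ) (ψ' χ) ?_
        intro P hP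
        refine hagree _ (List.mem_flatMap.mpr ⟨χ, ?_, List.mem_map.mpr ⟨P, hP, rfl⟩⟩)
        rw [Finset.mem_toList]
        exact fB.complete χ
      · intro i hi P' hP'
        obtain ⟨χ, hχmem, hmem⟩ := List.mem_flatMap.mp hP'
        obtain ⟨P, hP, rfl⟩ := List.mem_map.mp hmem
        obtain ⟨q₂, hq₂'⟩ := hq₂ i (le_trans le_sup_left hi) P hP
        have hχle : κf χ ≤ i :=
          le_trans (le_trans (Finset.le_sup (Finset.mem_univ χ)) le_sup_right) hi
        refine ⟨.lam (.app (Tm.wk q₂) (.app (.var .vz) (Tm.wk (tf χ i hχle)))), ?_⟩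
        intro ψ b hb
        have hred : Eqv (Tm.app (Tm.lam (.app (Tm.wk q₂)
              (.app (.var .vz) (Tm.wk (tf χ i hχle))))) b)
            (.app q₂ (.app b (tf χ i hχle))) := by
          refine Eqv.beta' _ _ ?_
          show Tm.app ((Tm.wk q₂).subst1 b)
            (.app ((Tm.var .vz).subst1 b) ((Tm.wk (tf χ i hχle)).subst1 b)) = _
          rw [Tm.wk_subst1, Tm.wk_subst1, Tm.wk_nil, Tm.wk_nil]
          rfl
        exact iDefines_congr h i (.atom ()) (P (ψ χ)) (Eqv.symm hred)
          (hq₂' (ψ χ) (.app b (tf χ i hχle)) (hb χ (tf χ i hχle) (htf χ i hχle)))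

theorem mainP (h : ℕ) (hh : 2 ≤ h) : ∀ A : Ty Unit, MainP h A := by
  suffices H : ∀ n A, Ty.size A ≤ n → MainP h A by
    intro A; exact H A.size A le_rfl
  intro n
  induction n with
  | zero => intro A hA; cases A <;> simp [Ty.size] at hA
  | succ n ihn =>
      intro A hA
      cases A with
      | atom u => exact fun φ => ⟨0, fun i _ => ⟨church i φ.val, Eqv.refl _⟩⟩
      | arrow B C =>
          simp only [Ty.size] at hA
          obtain ⟨ps, injp, κp, hps⟩ := sep_of h hh B (fun B' hB' =>
            ihn B' (by omega))
          intro φ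
          have hMC : MainP h C := ihn C (by omega)
          choose κL hκL using fun ψ : interp h B => hMC (φ ψ)
          choose Lt hLt using hκL
          letI fB := (interpFD h (by omega) B).1
          refine ⟨(κp ⊔ Finset.univ.sup κL) + (2*(h-1)+1), ?_⟩
          intro i hi
          obtain ⟨k, rfl⟩ : ∃ k, i = 2*(h-1)+1+k := ⟨i - (2*(h-1)+1), by
            have h1 : κp ≤ κp ⊔ Finset.univ.sup κL := le_sup_left
            omega⟩
          have hκpi : κp ≤ 2*(h-1)+1+k := by
            have h1 : κp ≤ κp ⊔ Finset.univ.sup κL := le_sup_left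
            omega
          have hLe : ∀ ψ' : interp h B, κL ψ' ≤ 2*(h-1)+1+k := by
            intro ψ'
            have h2 := Finset.le_sup (f := κL) (Finset.mem_univ ψ')
            have h3 : Finset.univ.sup κL ≤ κp ⊔ Finset.univ.sup κL := le_sup_right
            omega
          classical
          set qps : List ((interp h B → Fin h) ×
              Tm [] (Ty.arrow (B.substA (subN (2*(h-1)+1+k))) (NT (2*(h-1)+1+k)))) :=
            ps.attach.map (fun Pm => (Pm.1, (hps _ hκpi Pm.1 Pm.2).choose)) with hqps
          have hqdef : ∀ pq ∈ qps,
              iDefines h (2*(h-1)+1+k) (.arrow B (.atom ())) pq.1 pq.2 := by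
            intro pq hpq
            obtain ⟨Pm, _, rfl⟩ := List.mem_map.mp hpq
            exact (hps _ hκpi Pm.1 Pm.2).choose_spec
          have hfst : qps.map Prod.fst = ps := by
            rw [hqps, List.map_map]
            have := List.attach_map_val (l := ps) (f := fun P => P)
            simpa using this
          have hdig : ∀ ψ ψ' : interp h B,
              qps.map (fun pq => (pq.1 ψ).val) = qps.map (fun pq => (pq.1 ψ').val) →
              ψ = ψ' := by
            intro ψ ψ' hde
            refine injp _ _ ?_
            intro P hP
            rw [← hfst] at hP
            obtain ⟨pq, hpq, rfl⟩ := List.mem_map.mp hP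
            have := List.map_inj_left.mp hde pq hpq
            exact Fin.val_injective this
          set pick : List ℕ → interp h B := fun acc =>
            if hEx : ∃ ψ, qps.map (fun pq => (pq.1 ψ).val) = acc then hEx.choose
            else (interpFD h (by omega) B).2.2 with hpickdef
          refine ⟨.lam (treeOp (B.substA (subN (2*(h-1)+1+k)))
            (C.substA (subN (2*(h-1)+1+k))) (h-1) k
            (.var .vz) (fun acc => Lt (pick acc) _ (hLe _)) (qps.map Prod.snd) []), ?_⟩
          intro ψ b hb
          have hpick : pick (qps.map (fun pq => (pq.1 ψ).val)) = ψ := by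
            have hEx : ∃ ψ', qps.map (fun pq => (pq.1 ψ').val) =
                qps.map (fun pq => (pq.1 ψ).val) := ⟨ψ, rfl⟩
            rw [hpickdef]
            simp only [dif_pos hEx]
            exact hdig _ _ hEx.choose_spec
          have hbeta : Eqv (Tm.app (.lam (treeOp _ _ (h-1) k (.var .vz)
                (fun acc => Lt (pick acc) _ (hLe _)) (qps.map Prod.snd) [])) b)
              (treeOp _ _ (h-1) k b
                (fun acc => Lt (pick acc) _ (hLe _)) (qps.map Prod.snd) []) :=
            Eqv.beta' _ _ (treeOp_subst _ _ _ _ _ _ _ _ _)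
          have hsem := treeOp_correct h (h-1) k (by omega) ψ b hb
            (fun acc => Lt (pick acc) _ (hLe _)) qps hqdef []
          rw [Tm.wk_nil, List.nil_append] at hsem
          simp only [hpick] at hsem
          exact iDefines_congr h _ C (φ ψ) (Eqv.symm (hbeta.trans hsem))
            (hLt ψ _ (hLe ψ))

/--
**Lemma 4.1.** For every `P`-functional `φ ∈ A` (with `P = {0, …, h−1}`, `h ≥ 2`) there
is a natural number `κ(φ)` such that for every `i ≥ κ(φ)` there is a closed term
`φ^λ : Aⁱ` which `i`-defines `φ`.
-/
theorem lambda_defines_functionals (h : ℕ) (hh : 2 ≤ h) (A : Ty Unit) (φ : interp h A) :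
    ∃ κ : ℕ, ∀ i : ℕ, κ ≤ i →
      ∃ t : Tm [] (A.substA (subN i)), iDefines h i A φ t :=
  mainP h hh A φ
end

section
/- Let c assign to each atomic type of Λ× (including T) a natural number ≥ 2, and extend c to all types by c(A × B) = (c(A) + 1)·c(B) and c(A → B) = c(B)^{c(A)}. Then every one-step type reduction strictly decreases c; consequently the type reductions are strongly normalizing. -/
set_option autoImplicit false

/-- Types of the typed lambda calculus Λ× : generated from atomic types (`ν`) and the
constant atomic type `T` by `→` and `×`. -/
inductive Tyx (ν : Type) : Type
  | atom : ν → Tyx ν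
  | unit : Tyx ν
  | arrow : Tyx ν → Tyx ν → Tyx ν
  | prod : Tyx ν → Tyx ν → Tyx ν

/-- A typing context. -/
abbrev Ctxx (ν : Type) : Type := List (Tyx ν)

/-- Typed de Bruijn variables. -/
inductive Varx {ν : Type} : Ctxx ν → Tyx ν → Type
  | vz {Γ : Ctxx ν} {A : Tyx ν} : Varx (A :: Γ) A
  | vs {Γ : Ctxx ν} {A B : Tyx ν} : Varx Γ A → Varx (B :: Γ) A

/-- Typed terms of Λ×. -/
inductive Tmx {ν : Type} : Ctxx ν → Tyx ν → Type
  | var {Γ : Ctxx ν} {A : Tyx ν} : Varx Γ A → Tmx Γ A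
  | app {Γ : Ctxx ν} {A B : Tyx ν} : Tmx Γ (Tyx.arrow A B) → Tmx Γ A → Tmx Γ B
  | lam {Γ : Ctxx ν} {A B : Tyx ν} : Tmx (A :: Γ) B → Tmx Γ (Tyx.arrow A B)
  | pair {Γ : Ctxx ν} {A B : Tyx ν} : Tmx Γ A → Tmx Γ B → Tmx Γ (Tyx.prod A B)
  | p1 {Γ : Ctxx ν} {A B : Tyx ν} : Tmx Γ (Tyx.prod A B) → Tmx Γ A
  | p2 {Γ : Ctxx ν} {A B : Tyx ν} : Tmx Γ (Tyx.prod A B) → Tmx Γ B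
  | k {Γ : Ctxx ν} : Tmx Γ Tyx.unit

/-- Renamings between contexts. -/
def Renx {ν : Type} (Γ Δ : Ctxx ν) : Type := ∀ A : Tyx ν, Varx Γ A → Varx Δ A

def Renx.ext {ν : Type} {Γ Δ : Ctxx ν} (ρ : Renx Γ Δ) (A : Tyx ν) :
    ∀ B : Tyx ν, Varx (A :: Γ) B → Varx (A :: Δ) B
  | _, .vz => .vz
  | _, .vs w => .vs (ρ _ w)

def Tmx.rename {ν : Type} : ∀ {Γ Δ : Ctxx ν} {A : Tyx ν}, Renx Γ Δ → Tmx Γ A → Tmx Δ A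
  | _, _, _, ρ, .var v => .var (ρ _ v)
  | _, _, _, ρ, .app f a => .app (f.rename ρ) (a.rename ρ)
  | _, _, _, ρ, .lam b => .lam (b.rename (Renx.ext ρ _))
  | _, _, _, ρ, .pair a b => .pair (a.rename ρ) (b.rename ρ)
  | _, _, _, ρ, .p1 a => .p1 (a.rename ρ)
  | _, _, _, ρ, .p2 a => .p2 (a.rename ρ)
  | _, _, _, _, .k => .k

/-- Simultaneous substitutions. -/
def Substx {ν : Type} (Γ Δ : Ctxx ν) : Type := ∀ A : Tyx ν, Varx Γ A → Tmx Δ A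

def Substx.ext {ν : Type} {Γ Δ : Ctxx ν} (σ : Substx Γ Δ) (A : Tyx ν) :
    ∀ B : Tyx ν, Varx (A :: Γ) B → Tmx (A :: Δ) B
  | _, .vz => .var .vz
  | _, .vs w => (σ _ w).rename (fun _ => Varx.vs)

def Tmx.subst {ν : Type} : ∀ {Γ Δ : Ctxx ν} {A : Tyx ν}, Substx Γ Δ → Tmx Γ A → Tmx Δ A
  | _, _, _, σ, .var v => σ _ v
  | _, _, _, σ, .app f a => .app (f.subst σ) (a.subst σ)
  | _, _, _, σ, .lam b => .lam (b.subst (Substx.ext σ _))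
  | _, _, _, σ, .pair a b => .pair (a.subst σ) (b.subst σ)
  | _, _, _, σ, .p1 a => .p1 (a.subst σ)
  | _, _, _, σ, .p2 a => .p2 (a.subst σ)
  | _, _, _, _, .k => .k

def Substx.cons {ν : Type} {Γ Δ : Ctxx ν} {A : Tyx ν} (b : Tmx Δ A) (σ : Substx Γ Δ) :
    ∀ B : Tyx ν, Varx (A :: Γ) B → Tmx Δ B
  | _, .vz => b
  | _, .vs w => σ _ w

/-- Substitution of a single term for the last variable: `a[b/x]`. -/
def Tmx.subst1 {ν : Type} {Γ : Ctxx ν} {A B : Tyx ν} (a : Tmx (A :: Γ) B) (b : Tmx Γ A) :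
    Tmx Γ B :=
  a.subst (Substx.cons b (fun _ v => .var v))

/-- The theory Λ× of βη-equality with surjective pairing and terminal type `T`. -/
inductive Eqvx {ν : Type} : ∀ {Γ : Ctxx ν} {A : Tyx ν}, Tmx Γ A → Tmx Γ A → Prop
  | refl {Γ : Ctxx ν} {A : Tyx ν} (a : Tmx Γ A) : Eqvx a a
  | symm {Γ : Ctxx ν} {A : Tyx ν} {a b : Tmx Γ A} : Eqvx a b → Eqvx b a
  | trans {Γ : Ctxx ν} {A : Tyx ν} {a b c : Tmx Γ A} : Eqvx a b → Eqvx b c → Eqvx a c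
  | congApp {Γ : Ctxx ν} {A B : Tyx ν} {f g : Tmx Γ (Tyx.arrow A B)} {a b : Tmx Γ A} :
      Eqvx f g → Eqvx a b → Eqvx (.app f a) (.app g b)
  | congLam {Γ : Ctxx ν} {A B : Tyx ν} {a b : Tmx (A :: Γ) B} :
      Eqvx a b → Eqvx (.lam a) (.lam b)
  | congPair {Γ : Ctxx ν} {A B : Tyx ν} {a a' : Tmx Γ A} {b b' : Tmx Γ B} :
      Eqvx a a' → Eqvx b b' → Eqvx (.pair a b) (.pair a' b')
  | congP1 {Γ : Ctxx ν} {A B : Tyx ν} {a b : Tmx Γ (Tyx.prod A B)} :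
      Eqvx a b → Eqvx (.p1 a) (.p1 b)
  | congP2 {Γ : Ctxx ν} {A B : Tyx ν} {a b : Tmx Γ (Tyx.prod A B)} :
      Eqvx a b → Eqvx (.p2 a) (.p2 b)
  | beta {Γ : Ctxx ν} {A B : Tyx ν} (a : Tmx (A :: Γ) B) (b : Tmx Γ A) :
      Eqvx (.app (.lam a) b) (a.subst1 b)
  | eta {Γ : Ctxx ν} {A B : Tyx ν} (a : Tmx Γ (Tyx.arrow A B)) :
      Eqvx (.lam (.app (a.rename (fun _ => Varx.vs)) (.var .vz))) a
  | prodBeta1 {Γ : Ctxx ν} {A B : Tyx ν} (a : Tmx Γ A) (b : Tmx Γ B) :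
      Eqvx (.p1 (.pair a b)) a
  | prodBeta2 {Γ : Ctxx ν} {A B : Tyx ν} (a : Tmx Γ A) (b : Tmx Γ B) :
      Eqvx (.p2 (.pair a b)) b
  | prodEta {Γ : Ctxx ν} {A B : Tyx ν} (c : Tmx Γ (Tyx.prod A B)) :
      Eqvx (.pair (.p1 c) (.p2 c)) c
  | unit {Γ : Ctxx ν} (a : Tmx Γ Tyx.unit) : Eqvx a .k

def Varx.elim0 {ν : Type} {A : Tyx ν} {C : Sort*} : Varx ([] : Ctxx ν) A → C :=
  fun v => nomatch v

/-- Weakening of a closed term into an arbitrary context. -/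
def Tmx.wk {ν : Type} {Δ : Ctxx ν} {A : Tyx ν} (t : Tmx ([] : Ctxx ν) A) : Tmx Δ A :=
  t.rename (fun _ v => v.elim0)

/-- One-step reduction of types of Λ× (replacement of a redex subtype by its
contractum). -/
inductive TyStep {ν : Type} : Tyx ν → Tyx ν → Prop
  | arrProd (A B₁ B₂ : Tyx ν) :
      TyStep (.arrow A (.prod B₁ B₂)) (.prod (.arrow A B₁) (.arrow A B₂))
  | prodArr (A₁ A₂ B : Tyx ν) :
      TyStep (.arrow (.prod A₁ A₂) B) (.arrow A₁ (.arrow A₂ B))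
  | prodAssoc (A B C : Tyx ν) :
      TyStep (.prod A (.prod B C)) (.prod (.prod A B) C)
  | arrUnit (A : Tyx ν) : TyStep (.arrow A .unit) .unit
  | unitArr (B : Tyx ν) : TyStep (.arrow .unit B) B
  | prodUnit (A : Tyx ν) : TyStep (.prod A .unit) A
  | unitProd (A : Tyx ν) : TyStep (.prod .unit A) A
  | arrL {A A' : Tyx ν} (B : Tyx ν) : TyStep A A' → TyStep (.arrow A B) (.arrow A' B)
  | arrR (A : Tyx ν) {B B' : Tyx ν} : TyStep B B' → TyStep (.arrow A B) (.arrow A B')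
  | prodL {A A' : Tyx ν} (B : Tyx ν) : TyStep A A' → TyStep (.prod A B) (.prod A' B)
  | prodR (A : Tyx ν) {B B' : Tyx ν} : TyStep B B' → TyStep (.prod A B) (.prod A B')

/-- A type is in product normal form iff none of its subtypes is a redex, i.e. iff no
type reduction applies to it. -/
def PNF {ν : Type} (A : Tyx ν) : Prop := ∀ B : Tyx ν, ¬ TyStep A B

/-- The complexity measure of a type, computed from an assignment `cA` of natural
numbers to the atomic types and `cT` to the constant type `T`, by
`c(A × B) = (c(A) + 1)·c(B)` and `c(A → B) = c(B)^{c(A)}`. -/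
def tyMeasure {ν : Type} (cA : ν → ℕ) (cT : ℕ) : Tyx ν → ℕ
  | .atom v => cA v
  | .unit => cT
  | .prod A B => (tyMeasure cA cT A + 1) * tyMeasure cA cT B
  | .arrow A B => tyMeasure cA cT B ^ tyMeasure cA cT A

lemma tyMeasure_two_le {ν : Type} (cA : ν → ℕ) (cT : ℕ)
    (hA : ∀ v : ν, 2 ≤ cA v) (hT : 2 ≤ cT) : ∀ A : Tyx ν, 2 ≤ tyMeasure cA cT A := by
  intro A
  induction A with
  | atom v => exact hA v
  | unit => exact hT
  | arrow A B ihA ihB =>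
    calc 2 ≤ tyMeasure cA cT B := ihB
    _ = tyMeasure cA cT B ^ 1 := (pow_one _).symm
    _ ≤ tyMeasure cA cT B ^ tyMeasure cA cT A :=
      Nat.pow_le_pow_right (by omega) (by omega)
  | prod A B ihA ihB =>
    have : (tyMeasure cA cT A + 1) * tyMeasure cA cT B ≥ 1 * 2 :=
      Nat.mul_le_mul (by omega) ihB
    simpa [tyMeasure] using this

lemma aux_pow_gt {b a : ℕ} (hb : 2 ≤ b) (ha : 2 ≤ a) : b ^ a + 1 < (b + 1) ^ a := by
  induction a with
  | zero => omega
  | succ n ih =>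
    rcases Nat.lt_or_ge n 2 with h | h
    · interval_cases n
      · omega
      · ring_nf; nlinarith
    · have ihn := ih h
      have hbn : 2 ≤ b ^ n := by
        calc 2 = 2 ^ 1 := rfl
        _ ≤ b ^ n := Nat.pow_le_pow_left hb 1 |>.trans (Nat.pow_le_pow_right (by omega) (by omega))
      calc b ^ (n + 1) + 1 = b ^ n * b + 1 := by ring_nf
      _ < (b ^ n + 1) * (b + 1) := by nlinarith
      _ ≤ (b + 1) ^ n * (b + 1) := by nlinarith
      _ = (b + 1) ^ (n + 1) := by ring

/--
If every atomic type (including `T`) is assigned a complexity measure `≥ 2`, then every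
one-step type reduction strictly decreases the complexity measure; consequently the
type reductions are strongly normalizing.
-/
theorem tyStep_decreases_measure_and_SN {ν : Type} (cA : ν → ℕ) (cT : ℕ)
    (hA : ∀ v : ν, 2 ≤ cA v) (hT : 2 ≤ cT) :
    (∀ A B : Tyx ν, TyStep A B → tyMeasure cA cT B < tyMeasure cA cT A) ∧
    WellFounded (fun B A : Tyx ν => TyStep A B) := by
  have hge := tyMeasure_two_le cA cT hA hT
  have hdec : ∀ A B : Tyx ν, TyStep A B → tyMeasure cA cT B < tyMeasure cA cT A := by
    intro A B h
    induction h with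
    | arrProd A B₁ B₂ =>
      have hA := hge A; have hB₁ := hge B₁; have hB₂ := hge B₂
      simp only [tyMeasure]
      calc (tyMeasure cA cT B₁ ^ tyMeasure cA cT A + 1) * tyMeasure cA cT B₂ ^ tyMeasure cA cT A
          < (tyMeasure cA cT B₁ + 1) ^ tyMeasure cA cT A * tyMeasure cA cT B₂ ^ tyMeasure cA cT A := by
            exact Nat.mul_lt_mul_of_lt_of_le (aux_pow_gt hB₁ hA) le_rfl
              (Nat.pow_pos (by omega))
      _ = ((tyMeasure cA cT B₁ + 1) * tyMeasure cA cT B₂) ^ tyMeasure cA cT A := by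
            rw [mul_pow]
    | prodArr A₁ A₂ B =>
      have h1 := hge A₁; have h2 := hge A₂; have hB := hge B
      simp only [tyMeasure, ← pow_mul]
      apply Nat.pow_lt_pow_right (by omega)
      calc tyMeasure cA cT A₂ * tyMeasure cA cT A₁
          < tyMeasure cA cT A₂ * (tyMeasure cA cT A₁ + 1) := by
            exact Nat.mul_lt_mul_of_le_of_lt le_rfl (by omega) (by omega)
      _ = (tyMeasure cA cT A₁ + 1) * tyMeasure cA cT A₂ := by ring
    | prodAssoc A B C =>
      have hA := hge A; have hB := hge B; have hC := hge C
      simp only [tyMeasure]; nlinarith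
    | arrUnit A =>
      have hA := hge A
      have : cT ^ 1 < cT ^ tyMeasure cA cT A := Nat.pow_lt_pow_right (by omega) (by omega)
      simpa [tyMeasure] using this
    | unitArr B =>
      have hB := hge B
      have : tyMeasure cA cT B ^ 1 < tyMeasure cA cT B ^ cT := Nat.pow_lt_pow_right (by omega) (by omega)
      simpa [tyMeasure] using this
    | prodUnit A =>
      have hA := hge A; simp only [tyMeasure]; nlinarith
    | unitProd A =>
      have hA := hge A; simp only [tyMeasure]; nlinarith
    | arrL B _ ih =>
      simp only [tyMeasure]
      exact Nat.pow_lt_pow_right (by have := hge B; omega) ih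
    | arrR A _ ih =>
      simp only [tyMeasure]
      exact Nat.pow_lt_pow_left ih (by have := hge A; omega)
    | prodL B _ ih =>
      simp only [tyMeasure]
      exact Nat.mul_lt_mul_of_lt_of_le (by omega) le_rfl (by have := hge B; omega)
    | prodR A _ ih =>
      simp only [tyMeasure]
      exact Nat.mul_lt_mul_of_le_of_lt le_rfl ih (by omega)
  refine ⟨hdec, ?_⟩
  exact Subrelation.wf (fun {B A} h => hdec A B h)
    (InvImage.wf (tyMeasure cA cT) Nat.lt_wfRel.wf)
end
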